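/- arXiv:2101.00198 — 4 statements merged into one kernel-verified Lean document; each statement's English description precedes it below -/
import Mathlib

section
/- Let Σ be a partition (a pairwise disjoint collection of nonempty sets), V a set of variables, and 𝔍 : V → 𝒫(Σ). Define the induced assignment M_𝔍 v := ⋃ 𝔍(v). Then for any x, y, z ∈ V and any ⋆ ∈ {∪, \}, M_𝔍 x = M_𝔍 y ⋆ M_𝔍 z holds if and only if 𝔍(x) = 𝔍(y) ⋆ 𝔍(z) (as subsets of Σ). -/
theorem stmt3 {α V : Type*} (Prt : Set (Set α))
    (hne : ∀ σ ∈ Prt, σ.Nonempty)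
    (hdisj : ∀ σ ∈ Prt, ∀ τ ∈ Prt, σ ≠ τ → σ ∩ τ = ∅)
    (J : V → Set (Set α)) (hJ : ∀ v, J v ⊆ Prt) (x y z : V) :
    ((⋃₀ J x = ⋃₀ J y ∪ ⋃₀ J z) ↔ J x = J y ∪ J z) ∧
    ((⋃₀ J x = ⋃₀ J y \ ⋃₀ J z) ↔ J x = J y \ J z) := by
  have heq : ∀ σ ∈ Prt, ∀ τ ∈ Prt, ∀ a, a ∈ σ → a ∈ τ → σ = τ := by
    intro σ hσ τ hτ a ha hb
    by_contra h
    have := hdisj σ hσ τ hτ h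
    exact absurd (Set.mem_inter ha hb) (by simp [this])
  have hinj : ∀ A B : Set (Set α), A ⊆ Prt → B ⊆ Prt → ⋃₀ A = ⋃₀ B → A = B := by
    have key : ∀ A B : Set (Set α), A ⊆ Prt → B ⊆ Prt → ⋃₀ A = ⋃₀ B → A ⊆ B := by
      intro A B hA hB h σ hσ
      obtain ⟨a, ha⟩ := hne σ (hA hσ)
      have : a ∈ ⋃₀ B := h ▸ ⟨σ, hσ, ha⟩
      obtain ⟨τ, hτ, haτ⟩ := this
      rwa [heq σ (hA hσ) τ (hB hτ) a ha haτ]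
    intro A B hA hB h
    exact subset_antisymm (key A B hA hB h) (key B A hB hA h.symm)
  have hdiff : ∀ A B : Set (Set α), A ⊆ Prt → B ⊆ Prt →
      ⋃₀ (A \ B) = ⋃₀ A \ ⋃₀ B := by
    intro A B hA hB
    ext a
    constructor
    · rintro ⟨σ, ⟨hσA, hσB⟩, ha⟩
      refine ⟨⟨σ, hσA, ha⟩, ?_⟩
      rintro ⟨τ, hτ, haτ⟩
      exact hσB ((heq σ (hA hσA) τ (hB hτ) a ha haτ) ▸ hτ)
    · rintro ⟨⟨σ, hσ, ha⟩, hb⟩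
      exact ⟨σ, ⟨hσ, fun hσB => hb ⟨σ, hσB, ha⟩⟩, ha⟩
  constructor
  · constructor
    · intro h
      apply hinj _ _ (hJ x) (Set.union_subset (hJ y) (hJ z))
      rw [Set.sUnion_union]; exact h
    · intro h; rw [h, Set.sUnion_union]
  · constructor
    · intro h
      apply hinj _ _ (hJ x) (fun σ hσ => hJ y hσ.1)
      rw [hdiff _ _ (hJ y) (hJ z)]; exact h
    · intro h; rw [h, hdiff _ _ (hJ y) (hJ z)]
end

section
/- If a set x (of well-founded sets) is nonempty and satisfies x ⊗ x ⊆ x (where ⊗ is the unordered Cartesian product), then x is infinite. In particular, any model of the conjunction x ≠ ∅ ∧ z = x ⊗ x ∧ z ⊆ x assigns an infinite set to x. -/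
theorem stmt8 (x z : ZFSet) (hx : x ≠ ∅)
    (hz : ∀ u, u ∈ z ↔ ∃ a ∈ x, ∃ b ∈ x, u = insert a {b})
    (hzx : z ⊆ x) : x.toSet.Infinite := by
  obtain ⟨s, hs⟩ := (x.eq_empty_or_nonempty.resolve_left hx)
  set f : ℕ → ZFSet := fun n => (fun a => ({a} : ZFSet))^[n] s with hf
  have hmem : ∀ n, f n ∈ x := by
    intro n
    induction n with
    | zero => simpa [hf] using hs
    | succ n ih =>
      have : ({f n} : ZFSet) ∈ z := by
        rw [hz]
        exact ⟨f n, ih, f n, ih, by simp⟩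
      have h2 : f (n+1) = ({f n} : ZFSet) := by
        simp [hf, Function.iterate_succ_apply']
      rw [h2]; exact hzx this
  have hmono : StrictMono (fun n => (f n).rank) := by
    apply strictMono_nat_of_lt_succ
    intro n
    have h2 : f (n+1) = ({f n} : ZFSet) := by
      simp [hf, Function.iterate_succ_apply']
    rw [h2]
    exact ZFSet.rank_lt_of_mem (by simp)
  exact Set.infinite_of_injective_forall_mem
    (f := f) (fun a b h => hmono.injective (by rw [h])) hmem
end

section
/- Let Σ and Σ̂ be partitions, β : Σ → Σ̂ a bijection satisfying (C₂) and (C₃), Σ̂ weakly ⊗-transitive, and additionally the saturation condition (I₄): for every X ⊆ Σ, P*≤2(X) ⊆ ⋃Σ implies P*≤2(β[X]) ⊆ ⋃Σ̂. Then for any 𝔍 : V → 𝒫(Σ) and induced assignments M_𝔍, M̂_𝔍̂: if M_𝔍 y ⊗ M_𝔍 z ⊆ M_𝔍 x then M̂_𝔍̂ y ⊗ M̂_𝔍̂ z ⊆ M̂_𝔍̂ x, for all x, y, z ∈ V. -/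
def MemPle2 (X : Set ZFSet) (t : ZFSet) : Prop :=
  (∀ u ∈ t, ∃ s ∈ X, u ∈ s) ∧ (∀ s ∈ X, ∃ u ∈ s, u ∈ t) ∧
    ∃ a b : ZFSet, t = insert a {b}

def MemPgt2 (X : Set ZFSet) (t : ZFSet) : Prop :=
  (∀ u ∈ t, ∃ s ∈ X, u ∈ s) ∧ (∀ s ∈ X, ∃ u ∈ s, u ∈ t) ∧
    ∃ a b c : ZFSet, a ∈ t ∧ b ∈ t ∧ c ∈ t ∧ a ≠ b ∧ a ≠ c ∧ b ≠ c

/-! For `a ∈ β σ₁`, `c ∈ β σ₂` with `σ₁ ∈ 𝔍 y`, `σ₂ ∈ 𝔍 z`, the pair `{a, c}` belongs to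
`P*≤2(β[{σ₁, σ₂}])`. The hypothesis puts every member of `P*≤2({σ₁, σ₂})` into a block of `𝔍 x`,
so (I₄) puts `{a, c}` into some block `β σ`. By (C₂) some member of `σ` lies in `P*≤2({σ₁, σ₂})`,
hence in a block of `𝔍 x`, and since the blocks of `Σ` are disjoint, `σ` is that block. -/

lemma ZFSet.insert_singleton_comm (a c : ZFSet) : (insert a {c} : ZFSet) = insert c {a} := by
  ext u
  simp only [ZFSet.mem_insert_iff, ZFSet.mem_singleton]
  tauto

lemma memPle2_pair {s s' a c : ZFSet} (ha : a ∈ s) (hc : c ∈ s') :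
    MemPle2 {s, s'} (insert a {c}) := by
  refine ⟨?_, ?_, a, c, rfl⟩
  · intro u hu
    rcases ZFSet.mem_insert_iff.mp hu with rfl | hu
    · exact ⟨s, Set.mem_insert _ _, ha⟩
    · rw [ZFSet.mem_singleton.mp hu]
      exact ⟨s', Set.mem_insert_of_mem _ rfl, hc⟩
  · rintro v (rfl | rfl)
    · exact ⟨a, ha, ZFSet.mem_insert _ _⟩
    · exact ⟨c, hc, ZFSet.mem_insert_of_mem _ (ZFSet.mem_singleton.mpr rfl)⟩

lemma MemPle2.exists_of_pair {s s' t : ZFSet} (ht : MemPle2 {s, s'} t) :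
    ∃ a ∈ s, ∃ c ∈ s', t = insert a {c} := by
  obtain ⟨hcover, hmeet, a, c, rfl⟩ := ht
  have hmem : ∀ u, u ∈ (insert a {c} : ZFSet) ↔ u = a ∨ u = c := fun u => by
    simp only [ZFSet.mem_insert_iff, ZFSet.mem_singleton]
  have hcover' : ∀ u, u = a ∨ u = c → u ∈ s ∨ u ∈ s' := fun u hu => by
    obtain ⟨v, hv | hv, hu⟩ := hcover u ((hmem u).mpr hu) <;> subst hv <;> simp [hu]
  have hmeet' : ∀ v, v = s ∨ v = s' → a ∈ v ∨ c ∈ v := fun v hv => by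
    obtain ⟨u, hu, hut⟩ := hmeet v (by simpa using hv)
    rcases (hmem u).mp hut with rfl | rfl <;> simp [hu]
  rw [ZFSet.insert_singleton_comm a c]
  rcases hmeet' s (.inl rfl) with has | hcs <;> rcases hmeet' s' (.inr rfl) with has' | hcs'
  · rcases hcover' c (.inr rfl) with hcs | hcs'
    · exact ⟨c, hcs, a, has', rfl⟩
    · exact ⟨a, has, c, hcs', ZFSet.insert_singleton_comm c a⟩
  · exact ⟨a, has, c, hcs', ZFSet.insert_singleton_comm c a⟩
  · exact ⟨c, hcs, a, has', rfl⟩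
  · rcases hcover' a (.inl rfl) with has | has'
    · exact ⟨a, has, c, hcs', ZFSet.insert_singleton_comm c a⟩
    · exact ⟨c, hcs, a, has', rfl⟩

lemma eq_of_mem_of_mem {P : Set ZFSet} (hdisj : ∀ σ ∈ P, ∀ τ ∈ P, σ ≠ τ → σ ∩ τ = ∅)
    {σ τ t : ZFSet} (hσ : σ ∈ P) (hτ : τ ∈ P) (htσ : t ∈ σ) (htτ : t ∈ τ) : σ = τ := by
  by_contra hne
  have ht : t ∈ σ ∩ τ := ZFSet.mem_inter.mpr ⟨htσ, htτ⟩
  rw [hdisj σ hσ τ hτ hne] at ht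
  exact ZFSet.notMem_empty t ht

theorem stmt15_general {V : Type*} (Prt PrtH : Set ZFSet)
    (hdisj : ∀ σ ∈ Prt, ∀ τ ∈ Prt, σ ≠ τ → σ ∩ τ = ∅)
    (b : ZFSet → ZFSet) (hb : Set.BijOn b Prt PrtH)
    (hC2 : ∀ X ⊆ Prt, ∀ σ ∈ Prt, (∀ t ∈ σ, ¬ MemPle2 X t) →
      ∀ t ∈ b σ, ¬ MemPle2 (b '' X) t)
    (hI4 : ∀ X ⊆ Prt, (∀ t, MemPle2 X t → ∃ σ ∈ Prt, t ∈ σ) →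
      ∀ t, MemPle2 (b '' X) t → ∃ σ ∈ PrtH, t ∈ σ)
    (J : V → Set ZFSet) (hJ : ∀ v, J v ⊆ Prt) (x y z : V)
    (h : ∀ a b', (∃ σ ∈ J y, a ∈ σ) → (∃ σ ∈ J z, b' ∈ σ) →
      ∃ σ ∈ J x, (insert a {b'} : ZFSet) ∈ σ) :
    ∀ a b', (∃ σ ∈ J y, a ∈ b σ) → (∃ σ ∈ J z, b' ∈ b σ) →
      ∃ σ ∈ J x, (insert a {b'} : ZFSet) ∈ b σ := by
  rintro a c ⟨σ₁, hσ₁, ha⟩ ⟨σ₂, hσ₂, hc⟩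
  have hX : {σ₁, σ₂} ⊆ Prt := Set.pair_subset (hJ y hσ₁) (hJ z hσ₂)
  have hpairs : ∀ t, MemPle2 {σ₁, σ₂} t → ∃ σ ∈ J x, t ∈ σ := by
    intro t ht
    obtain ⟨a, ha, c, hc, rfl⟩ := ht.exists_of_pair
    exact h a c ⟨σ₁, hσ₁, ha⟩ ⟨σ₂, hσ₂, hc⟩
  have hac : MemPle2 (b '' {σ₁, σ₂}) (insert a {c}) := by
    rw [Set.image_pair]
    exact memPle2_pair ha hc
  obtain ⟨τ, hτ, hacτ⟩ := hI4 _ hX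
    (fun t ht => (hpairs t ht).imp fun σ hσ => ⟨hJ x hσ.1, hσ.2⟩) _ hac
  obtain ⟨σ, hσ, rfl⟩ := hb.surjOn hτ
  obtain ⟨t, htσ, ht⟩ : ∃ t ∈ σ, MemPle2 {σ₁, σ₂} t := by
    by_contra! H
    exact hC2 _ hX σ hσ H _ hacτ hac
  obtain ⟨σ', hσ', htσ'⟩ := hpairs t ht
  rw [eq_of_mem_of_mem hdisj hσ (hJ x hσ') htσ htσ'] at hacτ
  exact ⟨σ', hσ', hacτ⟩

theorem stmt15 {V : Type*} (Prt PrtH : Set ZFSet)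
    (hne : ∀ σ ∈ Prt, σ ≠ ∅) (hdisj : ∀ σ ∈ Prt, ∀ τ ∈ Prt, σ ≠ τ → σ ∩ τ = ∅)
    (hne' : ∀ σ ∈ PrtH, σ ≠ ∅) (hdisj' : ∀ σ ∈ PrtH, ∀ τ ∈ PrtH, σ ≠ τ → σ ∩ τ = ∅)
    (b : ZFSet → ZFSet) (hb : Set.BijOn b Prt PrtH)
    (hC2 : ∀ X ⊆ Prt, ∀ σ ∈ Prt, (∀ t ∈ σ, ¬ MemPle2 X t) →
      ∀ t ∈ b σ, ¬ MemPle2 (b '' X) t)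
    (hC3 : ∀ X ⊆ Prt, ∀ σ ∈ Prt, (∀ t ∈ σ, ¬ MemPgt2 X t) →
      ∀ t ∈ b σ, ¬ MemPgt2 (b '' X) t)
    (htrans : ∀ p ∈ PrtH, (∀ t ∈ p, ∃ A ⊆ PrtH, MemPle2 A t) →
      ∀ t ∈ p, ∀ u ∈ t, ∃ τ ∈ PrtH, u ∈ τ)
    (hI4 : ∀ X ⊆ Prt, (∀ t, MemPle2 X t → ∃ σ ∈ Prt, t ∈ σ) →
      ∀ t, MemPle2 (b '' X) t → ∃ σ ∈ PrtH, t ∈ σ)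
    (J : V → Set ZFSet) (hJ : ∀ v, J v ⊆ Prt) (x y z : V)
    (h : ∀ a b', (∃ σ ∈ J y, a ∈ σ) → (∃ σ ∈ J z, b' ∈ σ) →
      ∃ σ ∈ J x, (insert a {b'} : ZFSet) ∈ σ) :
    ∀ a b', (∃ σ ∈ J y, a ∈ b σ) → (∃ σ ∈ J z, b' ∈ b σ) →
      ∃ σ ∈ J x, (insert a {b'} : ZFSet) ∈ b σ :=
  stmt15_general Prt PrtH hdisj b hb hC2 hI4 J hJ x y z h
end

section
/- Every finite set assignment model of an MLuC-conjunction containing the literals x ≠ ∅ and x ⊗ x ⊆ x is impossible: no finite nonempty set x of well-founded sets satisfies x ⊗ x ⊆ x. -/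
/-! A finite nonempty set has an element `a` of maximal rank. The pair `{a, a}` has larger rank,
so it cannot lie in the set, contradicting closure under pairing. -/

namespace ZFSet

theorem exists_mem_forall_notMem_of_finite {s : Set ZFSet} (hs : s.Finite) (hne : s.Nonempty) :
    ∃ a ∈ s, ∀ y ∈ s, a ∉ y := by
  obtain ⟨a, ha, hmax⟩ := hs.exists_maximalFor rank s hne
  refine ⟨a, ha, fun y hy hay => ?_⟩
  have hlt : a.rank < y.rank := rank_lt_of_mem hay
  exact (hmax hy hlt.le).not_gt hlt

end ZFSet

theorem stmt19 (x : ZFSet) (hx : x ≠ ∅)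
    (hprod : ∀ a ∈ x, ∀ b ∈ x, (insert a {b} : ZFSet) ∈ x) :
    ¬ x.toSet.Finite := by
  intro hfin
  have hne : x.Nonempty := (x.eq_empty_or_nonempty).resolve_left hx
  obtain ⟨a, ha, hmax⟩ := ZFSet.exists_mem_forall_notMem_of_finite hfin hne
  exact hmax _ (hprod a ha a ha) (ZFSet.mem_insert a {a})
end
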